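/- Let N ≥ 1 and K̄ ≥ 1 be natural numbers, K = N·K̄, and let a : Fin K → ℝ be monotone (a_i ≤ a_j whenever i ≤ j). Define the sequential (consecutive) partition by D_j = {k : (j−1)·K̄ ≤ k < j·K̄} for j = 1, …, N. Then for every partition C_1, …, C_N of Fin K into N pairwise disjoint sets each of cardinality K̄, one has ∑_{j=1}^{N} max_{k ∈ D_j} a_k ≤ ∑_{n=1}^{N} max_{k ∈ C_n} a_k; in particular the sequential partition minimizes the sum of per-cluster maxima, and its value equals ∑_{j=1}^{N} a_{j·K̄ − 1} (0-based indices). -/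

import Mathlib

open scoped Classical

open Finset Function

/-!
Every cluster contributes its largest element, and the `j + 1` clusters with the smallest such
maxima contain `(j + 1) K̄` distinct indices, all at most the largest of these maxima. Hence the
`j`-th smallest cluster maximum is at index `≥ (j + 1) K̄ - 1`, which is exactly the maximum of
the `j`-th sequential block; summing the monotone `a` over both sides gives the inequality.
-/

theorem Monotone.finset_sup'_eq_of_isGreatest {α β : Type*} [Preorder α] [SemilatticeSup β]
    {f : α → β} (hf : Monotone f) {s : Finset α} (hs : s.Nonempty) {x : α}
    (hx : IsGreatest (s : Set α) x) : s.sup' hs f = f x :=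
  le_antisymm (sup'_le hs f fun _ hk => hf (hx.2 hk)) (le_sup' f hx.1)

theorem Monotone.le_of_card_filter_lt_le {α : Type*} [LinearOrder α] {N : ℕ} {g : Fin N → α}
    (hg : Monotone g) {x : α} {j : Fin N} (h : #{i | g i < x} ≤ j) : x ≤ g j := by
  by_contra! hj
  have hsub : Iic j ⊆ ({i | g i < x} : Finset (Fin N)) := fun i hi =>
    mem_filter.mpr ⟨mem_univ i, (hg (mem_Iic.mp hi)).trans_lt hj⟩
  have := card_le_card hsub
  rw [Fin.card_Iic] at this
  omega

theorem Finset.sum_le_sum_of_card_filter_lt_le {α β : Type*} [LinearOrder α] [AddCommMonoid β]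
    [PartialOrder β] [IsOrderedAddMonoid β] {N : ℕ} {f : α → β} (hf : Monotone f)
    {m t : Fin N → α} (h : ∀ j, #{n | t n < m j} ≤ j) : ∑ j, f (m j) ≤ ∑ n, f (t n) := by
  set σ := Tuple.sort t
  rw [← Equiv.sum_comp σ (fun n => f (t n))]
  refine sum_le_sum fun j _ => hf ((Tuple.monotone_sort t).le_of_card_filter_lt_le ?_)
  calc #{i | t (σ i) < m j} = #{n | t n < m j} := card_equiv σ (by simp)
    _ ≤ j := h j

theorem card_filter_lt_mul_le_of_pairwiseDisjoint {ι : Type*} [Fintype ι] {M Kb : ℕ}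
    {C : ι → Finset (Fin M)} (hdisj : Pairwise (Disjoint on C)) (hcard : ∀ n, #(C n) = Kb)
    {t : ι → Fin M} (ht : ∀ n, ∀ k ∈ C n, k ≤ t n) (x : Fin M) :
    #{n | t n < x} * Kb ≤ x := by
  set S : Finset ι := {n | t n < x}
  have hsub : S.biUnion C ⊆ Iio x := fun k hk => by
    obtain ⟨n, hn, hkn⟩ := mem_biUnion.mp hk
    exact mem_Iio.mpr ((ht n k hkn).trans_lt (mem_filter.mp hn).2)
  calc #S * Kb = #(S.biUnion C) := by
        rw [card_biUnion fun i _ j _ hij => hdisj hij, sum_congr rfl fun n _ => hcard n,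
          sum_const, smul_eq_mul]
    _ ≤ #(Iio x) := card_le_card hsub
    _ = x := Fin.card_Iio x

/-- Theorem 1: the sequential (consecutive) partition minimizes the sum of per-cluster
maxima among all partitions into N clusters of size Kb, and its value is
∑_j a_{j·Kb - 1} (0-based indices). -/
theorem stmt_4 (N Kb : ℕ) (hKb : 1 ≤ Kb)
    (a : Fin (N * Kb) → ℝ) (ha : Monotone a)
    (D : Fin N → Finset (Fin (N * Kb)))
    (hD : ∀ j : Fin N, D j =
      Finset.univ.filter (fun k : Fin (N * Kb) =>
        j.val * Kb ≤ k.val ∧ k.val < (j.val + 1) * Kb))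
    (hDne : ∀ j : Fin N, (D j).Nonempty)
    (C : Fin N → Finset (Fin (N * Kb)))
    (hdisj : ∀ i j : Fin N, i ≠ j → Disjoint (C i) (C j))
    (hcard : ∀ n : Fin N, (C n).card = Kb) :
    (∑ j : Fin N, (D j).sup' (hDne j) a ≤
        ∑ n : Fin N, (C n).sup' (Finset.card_pos.mp (by rw [hcard n]; omega)) a) ∧
      ∑ j : Fin N, (D j).sup' (hDne j) a =
        ∑ j : Fin N, a ⟨j.val * Kb + (Kb - 1), by
          have h1 : j.val + 1 ≤ N := j.isLt
          have h2 : (j.val + 1) * Kb ≤ N * Kb := Nat.mul_le_mul_right _ h1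
          have h3 : (j.val + 1) * Kb = j.val * Kb + Kb := by ring
          omega⟩ := by
  have hblock (j : Fin N) : j.val * Kb + (Kb - 1) < (j.val + 1) * Kb := by
    rw [add_one_mul]; omega
  set m : Fin N → Fin (N * Kb) := fun j =>
    ⟨j.val * Kb + (Kb - 1), (hblock j).trans_le (Nat.mul_le_mul_right Kb j.isLt)⟩
  have hD_sup (j : Fin N) : (D j).sup' (hDne j) a = a (m j) :=
    ha.finset_sup'_eq_of_isGreatest _ ⟨by simp [hD, m, hblock], fun k hk => by
      simp only [hD, coe_filter, mem_univ, true_and, Set.mem_ofPred_eq, add_one_mul] at hk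
      exact Fin.le_def.mpr (by simp only [m]; omega)⟩
  have hC_ne (n : Fin N) : (C n).Nonempty := card_pos.mp (by rw [hcard n]; omega)
  have hC_sup (n : Fin N) : (C n).sup' (hC_ne n) a = a ((C n).max' (hC_ne n)) :=
    ha.finset_sup'_eq_of_isGreatest _ (isGreatest_max' _ _)
  have hfew (j : Fin N) : #{n | (C n).max' (hC_ne n) < m j} ≤ j := by
    have hcount := card_filter_lt_mul_le_of_pairwiseDisjoint hdisj hcard
      (t := fun n => (C n).max' (hC_ne n)) (fun n k hk => le_max' _ k hk) (m j)
    exact Nat.lt_succ_iff.mp (Nat.lt_of_mul_lt_mul_right (hcount.trans_lt (hblock j)))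
  refine ⟨?_, sum_congr rfl fun j _ => hD_sup j⟩
  simpa only [hD_sup, hC_sup] using sum_le_sum_of_card_filter_lt_le ha hfew
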